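/- Let Q = circ(q_1,...,q_p) be a circulant quaternion matrix and O = F_p·l. If O·Q·O* = Diag(q̂_1,...,q̂_p), then the diagonal entries satisfy q̂_s = Σ_{m=1}^p ω^{(s-1)(m-1)}·conj(q_m) for each s, i.e., (q̂_1,...,q̂_p)^T = √p·F_p·(conj(q_1),...,conj(q_p))^T. -/

import Mathlib

/-!
Write `O = A·l` with `A = cq ∘ F_p`. Since `l·q = q̄·l` and `(a·l)(b·l) = -b̄·a`, the product
`O·Q·O*` is again a quaternion matrix, with `(s, t)` entry `∑ₖ conj(A_tk) ∑ⱼ A_sj conj(Q_jk)`.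
On the diagonal, circulance lets one substitute `j = k + n`, leaving as coefficient of
`conj(q_n)` the autocorrelation `∑ₖ conj(F_sk) F_s,k+n` of a DFT row, which is `ω^(sn)`
because `ω^p = 1` forces `|ω| = 1`.
-/

open Matrix Quaternion

/-- Embedding of the complex numbers into the quaternions (span of 1 and i). -/
noncomputable def cq (z : ℂ) : ℍ[ℝ] := ⟨z.re, z.im, 0, 0⟩

/-- The quaternion imaginary unit j. -/
noncomputable def qj : ℍ[ℝ] := ⟨0, 0, 1, 0⟩

/-- The octonions, built from the quaternions by the Cayley–Dickson process:
`(a, b)` represents `a + b·l`. -/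
def Oct : Type := ℍ[ℝ] × ℍ[ℝ]

noncomputable instance : AddCommGroup Oct :=
  inferInstanceAs (AddCommGroup (ℍ[ℝ] × ℍ[ℝ]))

/-- Cayley–Dickson multiplication, matching the standard octonion
multiplication table (e.g. `l·i = -il`, `(il)·(jl) = -k`). -/
noncomputable instance : Mul Oct :=
  ⟨fun x y => (x.1 * y.1 - star y.2 * x.2, y.2 * x.1 + x.2 * star y.1)⟩

noncomputable instance : One Oct := ⟨((1 : ℍ[ℝ]), (0 : ℍ[ℝ]))⟩

/-- Octonion conjugation. -/
noncomputable instance : Star Oct := ⟨fun x => (star x.1, -x.2)⟩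

/-- Embedding of the quaternions into the octonions. -/
noncomputable def qo (q : ℍ[ℝ]) : Oct := (q, 0)

/-- Embedding of the complex numbers into the octonions. -/
noncomputable def co (z : ℂ) : Oct := (cq z, 0)

/-- The octonion imaginary unit l. -/
noncomputable def ol : Oct := ((0 : ℍ[ℝ]), (1 : ℍ[ℝ]))

/-- The octonion imaginary unit j (the quaternion j viewed as an octonion). -/
noncomputable def oj : Oct := (qj, 0)

theorem cq_mul (z w : ℂ) : cq (z * w) = cq z * cq w := map_mul Quaternion.ofComplex z w

theorem cq_sum {ι : Type*} (s : Finset ι) (f : ι → ℂ) : cq (∑ i ∈ s, f i) = ∑ i ∈ s, cq (f i) :=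
  map_sum Quaternion.ofComplex f s

theorem star_cq (z : ℂ) : star (cq z) = cq (star z) := by
  ext <;> simp only [Quaternion.re_star, Quaternion.imI_star, Quaternion.imJ_star,
    Quaternion.imK_star] <;> simp [cq]

namespace Oct

def mk (a b : ℍ[ℝ]) : Oct := (a, b)

theorem mk_mul_mk (a b c d : ℍ[ℝ]) :
    mk a b * mk c d = mk (a * c - star d * b) (d * a + b * star c) := rfl

theorem star_mk (a b : ℍ[ℝ]) : star (mk a b) = mk (star a) (-b) := rfl

theorem sum_mk {ι : Type*} (s : Finset ι) (f g : ι → ℍ[ℝ]) :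
    ∑ i ∈ s, mk (f i) (g i) = mk (∑ i ∈ s, f i) (∑ i ∈ s, g i) :=
  (prod_mk_sum s f g).symm

end Oct

theorem qo_eq_mk (a : ℍ[ℝ]) : qo a = Oct.mk a 0 := rfl

theorem ol_eq_mk : ol = Oct.mk 0 1 := rfl

theorem qo_injective : Function.Injective qo := fun _ _ h => congrArg Prod.fst h

theorem qo_mul_ol (a : ℍ[ℝ]) : qo a * ol = Oct.mk 0 a := by
  simp [qo_eq_mk, ol_eq_mk, Oct.mk_mul_mk]

theorem mul_ol_mul_conjTranspose_apply {m n : Type*} [Fintype m] [Fintype n]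
    (A : Matrix m n ℍ[ℝ]) (B : Matrix n n ℍ[ℝ]) (s t : m) :
    (of (fun i j => qo (A i j) * ol) * B.map qo * (of fun i j => qo (A i j) * ol)ᴴ) s t =
      qo (∑ k, star (A t k) * ∑ j, A s j * star (B j k)) := by
  have hrow : ∀ k, (of (fun i j => qo (A i j) * ol) * B.map qo) s k =
      Oct.mk 0 (∑ j, A s j * star (B j k)) := by
    intro k
    simp only [mul_apply, of_apply, map_apply, qo_mul_ol]
    simp [qo_eq_mk, Oct.mk_mul_mk, Oct.sum_mk]
  simp only [mul_apply (M := _ * _), hrow]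
  simp only [conjTranspose_apply, of_apply, qo_mul_ol, Oct.star_mk, Oct.mk_mul_mk]
  simp [qo_eq_mk, Oct.sum_mk]

theorem sum_star_cq_mul_sum_cq_mul_star_sub {G : Type*} [AddCommGroup G] [Fintype G]
    (f : G → ℂ) (w : G → ℍ[ℝ]) :
    ∑ k, star (cq (f k)) * ∑ j, cq (f j) * star (w (j - k)) =
      ∑ n, cq (∑ k, star (f k) * f (k + n)) * star (w n) := by
  have hshift : ∀ k, star (cq (f k)) * ∑ j, cq (f j) * star (w (j - k)) =
      ∑ n, cq (star (f k) * f (k + n)) * star (w n) := by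
    intro k
    rw [Finset.mul_sum, ← Equiv.sum_comp (Equiv.addLeft k)]
    simp only [Equiv.coe_addLeft, add_sub_cancel_left, cq_mul, star_cq, mul_assoc]
  rw [Finset.sum_congr rfl fun k _ => hshift k, Finset.sum_comm]
  simp only [cq_sum, Finset.sum_mul]

theorem sum_star_pow_div_sqrt_mul_pow_add {p : ℕ} [NeZero p] {ζ : ℂ} (hζ : ζ ^ p = 1)
    (n : Fin p) :
    ∑ k : Fin p, star (ζ ^ (k : ℕ) / Real.sqrt p) * (ζ ^ ((k + n : Fin p) : ℕ) / Real.sqrt p) =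
      ζ ^ (n : ℕ) := by
  have hnorm : ‖ζ‖ = 1 := Complex.norm_eq_one_of_pow_eq_one hζ (NeZero.ne p)
  have hterm : ∀ k : Fin p,
      star (ζ ^ (k : ℕ) / Real.sqrt p) * (ζ ^ ((k + n : Fin p) : ℕ) / Real.sqrt p) =
        ζ ^ (n : ℕ) / p := by
    intro k
    have hunit : star (ζ ^ (k : ℕ)) * ζ ^ (k : ℕ) = 1 := by
      rw [Complex.star_def, Complex.conj_mul', norm_pow, hnorm]
      simp
    have hsqrt : ((Real.sqrt p : ℝ) : ℂ) * (Real.sqrt p : ℝ) = p := by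
      rw [← Complex.ofReal_mul, Real.mul_self_sqrt (Nat.cast_nonneg p), Complex.ofReal_natCast]
    have hstar : star ((Real.sqrt p : ℝ) : ℂ) = (Real.sqrt p : ℝ) := Complex.conj_ofReal _
    rw [Fin.val_add, ← pow_eq_pow_mod _ hζ, pow_add, star_div₀, hstar]
    calc star (ζ ^ (k : ℕ)) / (Real.sqrt p : ℂ) * (ζ ^ (k : ℕ) * ζ ^ (n : ℕ) / (Real.sqrt p : ℂ))
        = star (ζ ^ (k : ℕ)) * ζ ^ (k : ℕ) * ζ ^ (n : ℕ) /
            ((Real.sqrt p : ℝ) * (Real.sqrt p : ℝ)) := by ring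
      _ = ζ ^ (n : ℕ) / p := by rw [hunit, hsqrt, one_mul]
  rw [Finset.sum_congr rfl fun k _ => hterm k, Finset.sum_const, Finset.card_univ, Fintype.card_fin,
    nsmul_eq_mul, mul_div_cancel₀ _ (Nat.cast_ne_zero.mpr (NeZero.ne p))]

theorem exp_neg_two_pi_I_div_pow_self (p : ℕ) :
    Complex.exp (-(2 * Real.pi * Complex.I) / p) ^ p = 1 := by
  rcases eq_or_ne p 0 with rfl | hp
  · simp
  · rw [neg_div, Complex.exp_neg, inv_pow, (Complex.isPrimitiveRoot_exp p hp).pow_eq_one, inv_one]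

theorem stmt17_general (p : ℕ)
    (Fp : Matrix (Fin p) (Fin p) ℂ)
    (hF : ∀ s t, Fp s t =
      Complex.exp (-(2 * Real.pi * Complex.I) / p) ^ ((s : ℕ) * (t : ℕ)) / Real.sqrt p)
    (O : Matrix (Fin p) (Fin p) Oct)
    (hO : ∀ s t, O s t = co (Fp s t) * ol)
    (v : Fin p → ℍ[ℝ])
    (Q : Matrix (Fin p) (Fin p) Oct)
    (hQ : ∀ s t, Q s t = qo (Matrix.circulant v s t))
    (qhat : Fin p → ℍ[ℝ])
    (hdiag : O * Q * Oᴴ = Matrix.diagonal fun s => qo (qhat s)) :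
    ∀ s, qhat s = ∑ m : Fin p,
      cq (Complex.exp (-(2 * Real.pi * Complex.I) / p) ^ ((s : ℕ) * (m : ℕ))) *
        star (v m) := by
  intro s
  have : NeZero p := NeZero.of_pos s.pos
  set ω := Complex.exp (-(2 * Real.pi * Complex.I) / p)
  have hω : ω ^ p = 1 := exp_neg_two_pi_I_div_pow_self p
  have hautocorr : ∀ n, ∑ k, star (Fp s k) * Fp s (k + n) = (ω ^ (s : ℕ)) ^ (n : ℕ) := by
    simp only [hF, pow_mul]
    exact sum_star_pow_div_sqrt_mul_pow_add (by rw [← pow_mul, mul_comm, pow_mul, hω, one_pow])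
  have hO' : O = of fun i j => qo (Fp.map cq i j) * ol := by
    ext i j
    exact hO i j
  have hQ' : Q = (circulant v).map qo := by
    ext i j
    exact hQ i j
  have hentry := congr_fun₂ hdiag s s
  rw [hO', hQ', mul_ol_mul_conjTranspose_apply, diagonal_apply_eq] at hentry
  simp only [map_apply, circulant_apply] at hentry
  rw [← qo_injective hentry, sum_star_cq_mul_sum_cq_mul_star_sub (Fp s)]
  simp only [hautocorr, pow_mul]

/-- For `O = F_p·l` and a circulant quaternion matrix `Q = circ(q₁,…,q_p)`:
if `O·Q·O* = Diag(q̂₁,…,q̂_p)`, then (0-indexed)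
`q̂_s = ∑_m ω^(s·m)·conj(q_m)`, i.e. `q̂ = √p·F_p·conj(q)`. -/
theorem stmt17 (p : ℕ) (hp : 0 < p)
    (Fp : Matrix (Fin p) (Fin p) ℂ)
    (hF : ∀ s t, Fp s t =
      Complex.exp (-(2 * Real.pi * Complex.I) / p) ^ ((s : ℕ) * (t : ℕ)) / Real.sqrt p)
    (O : Matrix (Fin p) (Fin p) Oct)
    (hO : ∀ s t, O s t = co (Fp s t) * ol)
    (v : Fin p → ℍ[ℝ])
    (Q : Matrix (Fin p) (Fin p) Oct)
    (hQ : ∀ s t, Q s t = qo (Matrix.circulant v s t))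
    (qhat : Fin p → ℍ[ℝ])
    (hdiag : O * Q * Oᴴ = Matrix.diagonal fun s => qo (qhat s)) :
    ∀ s, qhat s = ∑ m : Fin p,
      cq (Complex.exp (-(2 * Real.pi * Complex.I) / p) ^ ((s : ℕ) * (m : ℕ))) *
        star (v m) :=
  stmt17_general p Fp hF O hO v Q hQ qhat hdiag
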